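/- The normalizing constant A(α,β) = Σ_{x ∈ ℕ^P} exp(Σ_j (α_j x_j − log(x_j!)) − Σ_{j<l} β_{jl} F(x_j) F(x_l)) is finite whenever F is bounded. -/

import Mathlib

open scoped BigOperators

noncomputable def nodeSum {P : ℕ} (α : Fin P → ℝ) (x : Fin P → ℕ) : ℝ :=
  ∑ j, (α j * (x j : ℝ) - Real.log (Nat.factorial (x j)))

noncomputable def edgeSum {P : ℕ} (β : Fin P → Fin P → ℝ) (F : ℕ → ℝ) (x : Fin P → ℕ) : ℝ :=
  ∑ j, ∑ l, if j < l then β j l * F (x j) * F (x l) else 0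

/-- Unnormalized weight of the pairwise MRF for counts. -/
noncomputable def w {P : ℕ} (α : Fin P → ℝ) (β : Fin P → Fin P → ℝ) (F : ℕ → ℝ)
    (x : Fin P → ℕ) : ℝ :=
  Real.exp (nodeSum α x - edgeSum β F x)

/-- Normalizing constant A(α,β). -/
noncomputable def Anorm {P : ℕ} (α : Fin P → ℝ) (β : Fin P → Fin P → ℝ) (F : ℕ → ℝ) : ℝ :=
  ∑' x : Fin P → ℕ, w α β F x

/-- The transformation F(x) = (arctan x)^θ. -/
noncomputable def Fpow (θ : ℝ) : ℕ → ℝ := fun n => Real.arctan (n : ℝ) ^ θ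

/-!
Bounding `F` bounds the interaction term `edgeSum` uniformly, so the weight is dominated by a
constant times `∏ j, exp (α j) ^ x j / (x j)!`, a product of independent Poisson weights whose
sum over `ℕ^P` is `∏ j, exp (exp (α j))`.
-/

open Finset

theorem summable_pi_prod_of_nonneg {ι κ : Type*} [Fintype ι] {g : ι → κ → ℝ}
    (hg : ∀ i, Summable (g i)) (hg0 : ∀ i n, 0 ≤ g i n) :
    Summable fun x : ι → κ => ∏ i, g i (x i) := by
  classical
  have hprod0 : ∀ x : ι → κ, 0 ≤ ∏ i, g i (x i) := fun x => prod_nonneg fun i _ => hg0 i _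
  refine summable_of_sum_le (c := ∏ i, ∑' n, g i n) hprod0 fun S => ?_
  calc ∑ x ∈ S, ∏ i, g i (x i)
      ≤ ∑ x ∈ Fintype.piFinset fun i => S.image (· i), ∏ i, g i (x i) :=
        sum_le_sum_of_subset_of_nonneg
          (fun x hx => Fintype.mem_piFinset.2 fun i => mem_image_of_mem _ hx)
          (fun x _ _ => hprod0 x)
    _ = ∏ i, ∑ n ∈ S.image (· i), g i n := (prod_univ_sum _ _).symm
    _ ≤ ∏ i, ∑' n, g i n :=
        prod_le_prod (fun i _ => sum_nonneg fun n _ => hg0 i n)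
          fun i _ => (hg i).sum_le_tsum _ fun n _ => hg0 i n

theorem exp_nodeSum {P : ℕ} (α : Fin P → ℝ) (x : Fin P → ℕ) :
    Real.exp (nodeSum α x) = ∏ j, Real.exp (α j) ^ x j / (x j).factorial := by
  rw [nodeSum, Real.exp_sum]
  refine prod_congr rfl fun j _ => ?_
  rw [Real.exp_sub, Real.exp_log (by positivity), mul_comm, Real.exp_nat_mul]

theorem abs_edgeSum_le {P : ℕ} (β : Fin P → Fin P → ℝ) {F : ℕ → ℝ} {U : ℝ}
    (hF : ∀ n, |F n| ≤ U) (x : Fin P → ℕ) :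
    |edgeSum β F x| ≤ ∑ j, ∑ l, |β j l| * U * U := by
  have hU : 0 ≤ U := (abs_nonneg _).trans (hF 0)
  refine (abs_sum_le_sum_abs _ _).trans <| sum_le_sum fun j _ => ?_
  refine (abs_sum_le_sum_abs _ _).trans <| sum_le_sum fun l _ => ?_
  split_ifs
  · rw [abs_mul, abs_mul]
    gcongr
    exacts [hF _, hF _]
  · rw [abs_zero]
    positivity

theorem w_le_exp_mul_prod {P : ℕ} (α : Fin P → ℝ) (β : Fin P → Fin P → ℝ) {F : ℕ → ℝ} {U : ℝ}
    (hF : ∀ n, |F n| ≤ U) (x : Fin P → ℕ) :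
    w α β F x ≤ Real.exp (∑ j, ∑ l, |β j l| * U * U) *
      ∏ j, Real.exp (α j) ^ x j / (x j).factorial := by
  have hedge := neg_le_of_abs_le (abs_edgeSum_le β hF x)
  rw [w, ← exp_nodeSum, ← Real.exp_add]
  exact Real.exp_le_exp.2 (by linarith)

theorem stmt1 (P : ℕ) (α : Fin P → ℝ) (β : Fin P → Fin P → ℝ)
    (F : ℕ → ℝ) (U : ℝ) (hF : ∀ x, |F x| ≤ U) :
    Summable (fun x : Fin P → ℕ => w α β F x) := by
  have hpoisson : Summable fun x : Fin P → ℕ => ∏ j, Real.exp (α j) ^ x j / (x j).factorial :=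
    summable_pi_prod_of_nonneg (g := fun j (n : ℕ) => Real.exp (α j) ^ n / n.factorial)
      (fun j => Real.summable_pow_div_factorial _)
      fun j n => by positivity
  exact hpoisson.mul_left _ |>.of_nonneg_of_le (fun x => (Real.exp_pos _).le)
    (w_le_exp_mul_prod α β hF)
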